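/- arXiv:math/0404078 — 5 statements merged into one kernel-verified Lean document; each statement's English description precedes it below -/
import Mathlib

section
/- With notation as in the counting of limit roots for a fixed curve: let Γ be a connected graph (the dual graph of a nodal curve C of genus g with normalization of genus g^ν, so g = g^ν + b₁(Γ)), and fix d : V(Γ) → ℤ/r of total sum 0. Then Σ over all weighted subgraphs Δ^w satisfying (C1),(C2) of r^{2g^ν + b₁(Γ∖Δ)} · r^{b₁(Γ) − b₁(Γ∖Δ)} = r^{2g}. (Here Γ∖Δ denotes Γ with the edges of Δ removed, and b₁ of a possibly disconnected graph is #edges − #vertices + #components.) -/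
/-- The number of connected components of the subgraph of `(V, E)` with edge set `s`. -/
noncomputable def subgraphComponents {V E : Type} (head tail : E → V) (s : Finset E) : ℕ :=
  Nat.card (Quot (fun x y : V =>
    ∃ e ∈ s, (head e = x ∧ tail e = y) ∨ (head e = y ∧ tail e = x)))

/-- The first Betti number `b₁ = #edges − #vertices + #components` of the subgraph of
`(V, E)` with edge set `s` (and all the vertices `V`). -/
noncomputable def subgraphBetti {V E : Type} [Fintype V] (head tail : E → V)
    (s : Finset E) : ℕ :=
  s.card + subgraphComponents head tail s - Fintype.card V

/-! Conditions (C1) force `v = -u`, and then (C2) says that the boundary `∂u` of the edge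
weighting `u : E → ℤ/r` is `d`. So the weighted subgraphs form a fibre of the boundary map
`∂ : (ℤ/r)^E → (ℤ/r)^V`, whose image, for connected `Γ`, is the hyperplane of functions of sum
zero; hence there are `r^(|E| - |V| + 1) = r^b₁(Γ)` of them. An edge merges at most two
components, so `#edges + #components` is monotone in the edge set; thus `b₁(Γ∖Δ) ≤ b₁(Γ)` and
every summand equals `r^(2g^ν + b₁(Γ))`. -/

lemma Nat.card_le_card_add_one_of_injOn_compl {α β : Type*} [Finite β] {f : α → β} {a : α}
    (hf : Set.InjOn f {a}ᶜ) : Nat.card α ≤ Nat.card β + 1 := by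
  classical
  have hinj : Function.Injective fun x => if x = a then none else some (f x) := by
    intro x y hxy
    by_cases hx : x = a <;> by_cases hy : y = a <;> simp_all [hf.eq_iff]
  simpa using Nat.card_le_card_of_injective _ hinj

lemma AddMonoidHom.card_ker_mul_card_eq_of_range_eq_ker {G H K : Type*} [AddGroup G]
    [AddGroup H] [AddGroup K] (f : G →+ H) (g : H →+ K) (hfg : f.range = g.ker)
    (hg : Function.Surjective g) : Nat.card f.ker * Nat.card H = Nat.card G * Nat.card K := by
  have hG : Nat.card f.ker * Nat.card f.range = Nat.card G := by
    rw [← AddSubgroup.index_ker, f.ker.card_mul_index]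
  have hH : Nat.card g.ker * Nat.card K = Nat.card H := by
    rw [← AddSubgroup.card_top (G := K), ← AddMonoidHom.range_eq_top.mpr hg,
      ← AddSubgroup.index_ker, g.ker.card_mul_index]
  rw [← hH, ← hfg, ← mul_assoc, hG]

def IsConnectedGraph {V E : Type*} (head tail : E → V) : Prop :=
  ∀ a b : V, Relation.ReflTransGen
    (fun x y => ∃ e, (head e = x ∧ tail e = y) ∨ (head e = y ∧ tail e = x)) a b

section Graph

variable {V E : Type} (head tail : E → V)

def subgraphAdj (s : Finset E) (x y : V) : Prop :=
  ∃ e ∈ s, (head e = x ∧ tail e = y) ∨ (head e = y ∧ tail e = x)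

lemma subgraphComponents_eq_card_quot (s : Finset E) :
    subgraphComponents head tail s = Nat.card (Quot (subgraphAdj head tail s)) := rfl

/-- Adding the edge `e` can only merge the components of its two endpoints. -/
lemma eqvGen_subgraphAdj_insert [DecidableEq E] (e : E) (s : Finset E) {x y : V}
    (hxy : Relation.EqvGen (subgraphAdj head tail (insert e s)) x y) :
    Quot.mk (subgraphAdj head tail s) x = Quot.mk _ y ∨
      {x, y} ⊆ Quot.mk (subgraphAdj head tail s) ⁻¹' {Quot.mk _ (head e), Quot.mk _ (tail e)} := by
  set S := Quot.mk (subgraphAdj head tail s) ⁻¹' {Quot.mk _ (head e), Quot.mk _ (tail e)}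
  let T : V → V → Prop := fun x y =>
    Quot.mk (subgraphAdj head tail s) x = Quot.mk _ y ∨ {x, y} ⊆ S
  have hT : Equivalence T := by
    refine ⟨fun x => .inl rfl, fun h => h.imp Eq.symm fun h => by rwa [Set.pair_comm], ?_⟩
    simp only [T, Set.insert_subset_iff, Set.singleton_subset_iff]
    rintro x y z (hxy | ⟨hx, hy⟩) (hyz | ⟨hy', hz⟩)
    · exact .inl (hxy.trans hyz)
    · exact .inr ⟨by simpa [S, hxy] using hy', hz⟩
    · exact .inr ⟨hx, by simpa [S, hyz] using hy⟩
    · exact .inr ⟨hx, hz⟩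
  refine hT.eqvGen_iff.mp (Relation.EqvGen.mono ?_ _ _ hxy)
  rintro x y ⟨e', he', hx⟩
  rcases Finset.mem_insert.mp he' with rfl | he'
  · rcases hx with ⟨rfl, rfl⟩ | ⟨rfl, rfl⟩ <;> simp [T, S, Set.insert_subset_iff]
  · exact .inl (Quot.sound ⟨e', he', hx⟩)

lemma subgraphComponents_le_insert [Finite V] [DecidableEq E] (e : E) (s : Finset E) :
    subgraphComponents head tail s ≤ subgraphComponents head tail (insert e s) + 1 := by
  let φ : Quot (subgraphAdj head tail s) → Quot (subgraphAdj head tail (insert e s)) :=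
    Quot.map id fun x y ⟨e', he', hx⟩ => ⟨e', Finset.mem_insert_of_mem he', hx⟩
  refine Nat.card_le_card_add_one_of_injOn_compl (f := φ) (a := Quot.mk _ (head e)) ?_
  rintro ⟨x⟩ hx ⟨y⟩ hy hφ
  rcases eqvGen_subgraphAdj_insert head tail e s (Quot.eqvGen_exact hφ) with h | h
  · exact h
  · simp only [Set.insert_subset_iff, Set.singleton_subset_iff, Set.mem_preimage,
      Set.mem_insert_iff, Set.mem_singleton_iff] at h
    simp only [Set.mem_compl_singleton_iff] at hx hy
    exact (h.1.resolve_left hx).trans (h.2.resolve_left hy).symm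

lemma card_add_subgraphComponents_mono [Finite V] {s t : Finset E} (hst : s ⊆ t) :
    s.card + subgraphComponents head tail s ≤ t.card + subgraphComponents head tail t := by
  classical
  suffices ∀ u : Finset E, s.card + subgraphComponents head tail s ≤
      (s ∪ u).card + subgraphComponents head tail (s ∪ u) by
    simpa [Finset.union_sdiff_of_subset hst] using this (t \ s)
  intro u
  induction u using Finset.induction_on with
  | empty => simp
  | insert e u he ih =>
    rw [Finset.union_insert]
    refine ih.trans ?_
    by_cases he' : e ∈ s ∪ u
    · rw [Finset.insert_eq_of_mem he']
    · rw [Finset.card_insert_of_notMem he']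
      have := subgraphComponents_le_insert head tail e (s ∪ u)
      omega

lemma subgraphBetti_mono [Fintype V] {s t : Finset E} (hst : s ⊆ t) :
    subgraphBetti head tail s ≤ subgraphBetti head tail t :=
  Nat.sub_le_sub_right (card_add_subgraphComponents_mono head tail hst) _

lemma subgraphComponents_empty [Fintype V] :
    subgraphComponents head tail (∅ : Finset E) = Fintype.card V := by
  rw [subgraphComponents_eq_card_quot, ← Nat.card_eq_fintype_card]
  refine (Nat.card_eq_of_bijective _ ⟨fun x y hxy => ?_, Quot.exists_rep⟩).symm
  exact eq_equivalence.eqvGen_iff.mp <| Relation.EqvGen.mono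
    (fun _ _ ⟨e, he, _⟩ => absurd he (Finset.notMem_empty e)) _ _ (Quot.eqvGen_exact hxy)

lemma subgraphComponents_univ_of_connected [Fintype E] [Nonempty V]
    (hconn : IsConnectedGraph head tail) :
    subgraphComponents head tail (Finset.univ : Finset E) = 1 := by
  rw [subgraphComponents_eq_card_quot, Nat.card_eq_one_iff_unique]
  refine ⟨⟨?_⟩, ⟨Quot.mk _ (Classical.arbitrary V)⟩⟩
  rintro ⟨x⟩ ⟨y⟩
  induction hconn x y with
  | refl => rfl
  | tail _ hyz ih =>
    obtain ⟨e, he⟩ := hyz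
    exact ih.trans (Quot.sound ⟨e, Finset.mem_univ e, he⟩)

lemma card_le_card_add_one_of_connected [Fintype V] [Fintype E] [Nonempty V]
    (hconn : IsConnectedGraph head tail) :
    Fintype.card V ≤ Fintype.card E + 1 := by
  simpa [subgraphComponents_empty, subgraphComponents_univ_of_connected head tail hconn]
    using card_add_subgraphComponents_mono head tail (Finset.empty_subset Finset.univ)

end Graph

section Boundary

variable {V E A : Type*} [AddCommGroup A]

def vertexSum [Fintype V] : (V → A) →+ A := ∑ x, Pi.evalAddMonoidHom (fun _ => A) x

lemma vertexSum_apply [Fintype V] (f : V → A) : vertexSum f = ∑ x, f x := by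
  simp [vertexSum]

lemma vertexSum_surjective [Fintype V] [Nonempty V] :
    Function.Surjective (vertexSum : (V → A) →+ A) := by
  classical
  intro a
  refine ⟨Pi.single (Classical.arbitrary V) a, ?_⟩
  simp [vertexSum_apply]

variable [Fintype E] [DecidableEq V] (head tail : E → V)

def boundary : (E → A) →+ (V → A) where
  toFun u := ∑ e, (Pi.single (head e) (u e) - Pi.single (tail e) (u e))
  map_zero' := by simp
  map_add' u v := by
    simp only [Pi.add_apply, Pi.single_add, add_sub_add_comm, Finset.sum_add_distrib]

lemma boundary_apply (u : E → A) (x : V) :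
    boundary head tail u x =
      ∑ e, ((if head e = x then u e else 0) + (if tail e = x then -u e else 0)) := by
  simp only [boundary, AddMonoidHom.coe_mk, ZeroHom.coe_mk, Finset.sum_apply, Pi.sub_apply,
    Pi.single_apply, eq_comm (a := x)]
  refine Finset.sum_congr rfl fun e _ => ?_
  split_ifs <;> simp [sub_eq_add_neg]

lemma halfEdgeWeights_conditions_iff (d : V → A) (u v : E → A) :
    ((∀ e, u e + v e = 0 ∧ (u e = 0 ↔ v e = 0)) ∧
      ∀ x, ∑ e, ((if head e = x then u e else 0) + (if tail e = x then v e else 0)) = d x) ↔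
    v = -u ∧ boundary head tail u = d := by
  have hv : (∀ e, u e + v e = 0 ∧ (u e = 0 ↔ v e = 0)) ↔ v = -u := by
    simp only [funext_iff, Pi.neg_apply, add_eq_zero_iff_eq_neg']
    exact ⟨fun h e => (h e).1, fun h e => ⟨h e, by rw [h e, neg_eq_zero]⟩⟩
  constructor
  · rintro ⟨h1, h2⟩
    obtain rfl := hv.1 h1
    exact ⟨rfl, funext fun x => (boundary_apply head tail u x).trans (h2 x)⟩
  · rintro ⟨rfl, rfl⟩
    exact ⟨hv.2 rfl, fun x => (boundary_apply head tail u x).symm⟩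

lemma boundary_single [DecidableEq E] (e : E) (a : A) :
    boundary head tail (Pi.single e a) = Pi.single (head e) a - Pi.single (tail e) a := by
  simp only [boundary, AddMonoidHom.coe_mk, ZeroHom.coe_mk]
  rw [Finset.sum_eq_single e (fun e' _ he' => by simp [he']) (by simp)]
  simp

lemma vertexSum_boundary [Fintype V] (u : E → A) : vertexSum (boundary head tail u) = 0 := by
  simp [boundary, vertexSum_apply, Finset.sum_apply, Finset.sum_comm (γ := V)]

lemma single_sub_single_mem_range_boundary
    (hconn : IsConnectedGraph head tail)
    (x y : V) (a : A) : (Pi.single x a - Pi.single y a : V → A) ∈ (boundary head tail).range := by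
  classical
  induction hconn x y with
  | refl => simp
  | @tail y z _ hyz ih =>
    rw [← sub_add_sub_cancel _ (Pi.single y a)]
    refine add_mem ih ?_
    obtain ⟨e, ⟨rfl, rfl⟩ | ⟨rfl, rfl⟩⟩ := hyz
    · exact ⟨Pi.single e a, boundary_single head tail e a⟩
    · exact ⟨-Pi.single e a, by rw [map_neg, boundary_single, neg_sub]⟩

lemma range_boundary [Fintype V] [Nonempty V]
    (hconn : IsConnectedGraph head tail) :
    (boundary head tail).range = (vertexSum : (V → A) →+ A).ker := by
  refine le_antisymm (by rintro _ ⟨u, rfl⟩; exact vertexSum_boundary head tail u) fun f hf => ?_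
  have hf : ∑ x, f x = 0 := by rwa [AddMonoidHom.mem_ker, vertexSum_apply] at hf
  set x₀ := Classical.arbitrary V
  have hdecomp : f = ∑ x, (Pi.single x (f x) - Pi.single x₀ (f x)) := by
    ext z
    simp [Finset.sum_apply, Pi.single_apply, hf]
  rw [hdecomp]
  exact sum_mem fun x _ => single_sub_single_mem_range_boundary head tail hconn x x₀ (f x)

end Boundary

section Count

variable {V E : Type} {A : Type*} [Fintype V] [Fintype E] [DecidableEq V] [AddCommGroup A]
  (head tail : E → V)

lemma card_ker_boundary_mul [Nonempty V] [Finite A]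
    (hconn : IsConnectedGraph head tail) :
    Nat.card (boundary head tail : (E → A) →+ (V → A)).ker * Nat.card A ^ Fintype.card V =
      Nat.card A ^ (Fintype.card E + 1) := by
  have := AddMonoidHom.card_ker_mul_card_eq_of_range_eq_ker _ _
    (range_boundary (A := A) head tail hconn) (vertexSum_surjective : Function.Surjective
      (vertexSum : (V → A) →+ A))
  rwa [Nat.card_fun, Nat.card_fun, ← pow_succ, Nat.card_eq_fintype_card (α := V),
    Nat.card_eq_fintype_card (α := E)] at this

lemma card_filter_boundary_eq [DecidableEq E] [Nonempty V] [Fintype A] [DecidableEq A]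
    (hconn : IsConnectedGraph head tail)
    (d : V → A) (hd : ∑ x, d x = 0) :
    (Finset.univ.filter fun u => boundary head tail u = d).card =
      Fintype.card A ^ (Fintype.card E + 1 - Fintype.card V) := by
  obtain ⟨u₀, rfl⟩ : d ∈ (boundary head tail).range := by
    rwa [range_boundary head tail hconn, AddMonoidHom.mem_ker, vertexSum_apply]
  have hfiber : (Finset.univ.filter fun u => boundary head tail u = boundary head tail u₀).card =
      Nat.card (boundary head tail : (E → A) →+ (V → A)).ker := by
    rw [AddMonoidHom.card_fiber_eq_of_mem_range _ ⟨u₀, rfl⟩ ⟨0, map_zero _⟩,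
      ← Fintype.card_subtype, ← Nat.card_eq_fintype_card]
    rfl
  have hcard := card_ker_boundary_mul (A := A) head tail hconn
  rw [← Nat.sub_add_cancel (card_le_card_add_one_of_connected head tail hconn), pow_add] at hcard
  simp only [Nat.card_eq_fintype_card] at hcard
  rw [hfiber, Nat.card_eq_fintype_card]
  exact Nat.eq_of_mul_eq_mul_right (pow_pos Fintype.card_pos _) hcard

lemma card_filter_boundary_eq_pow_subgraphBetti [DecidableEq E] [Fintype A] [DecidableEq A]
    (hconn : IsConnectedGraph head tail)
    (d : V → A) (hd : ∑ x, d x = 0) :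
    (Finset.univ.filter fun u => boundary head tail u = d).card =
      Fintype.card A ^ subgraphBetti head tail (Finset.univ : Finset E) := by
  cases isEmpty_or_nonempty V with
  | inl hV =>
    have : IsEmpty E := Function.isEmpty head
    simp [subgraphBetti, subgraphComponents_empty, Subsingleton.elim _ d]
  | inr hV =>
    rw [card_filter_boundary_eq head tail hconn d hd, subgraphBetti,
      subgraphComponents_univ_of_connected head tail hconn, Finset.card_univ]

lemma card_filter_halfEdgeWeights [DecidableEq E] [Fintype A] [DecidableEq A] (d : V → A) :
    (Finset.univ.filter fun p : (E → A) × (E → A) =>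
        (∀ e, p.1 e + p.2 e = 0 ∧ (p.1 e = 0 ↔ p.2 e = 0)) ∧
        (∀ x, (∑ e, ((if head e = x then p.1 e else 0) +
          (if tail e = x then p.2 e else 0))) = d x)).card =
      (Finset.univ.filter fun u => boundary head tail u = d).card := by
  rw [Finset.filter_congr fun p _ => halfEdgeWeights_conditions_iff head tail d p.1 p.2]
  refine Finset.card_nbij' Prod.fst (fun u => (u, -u)) ?_ ?_ ?_ ?_ <;>
    intro p <;> simp +contextual [Prod.ext_iff]

end Count

open Classical in
/-- Counting limit roots on a fixed curve: `Γ` is the (connected) dual graph of a nodal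
curve `C` of genus `g` whose normalization has genus `g^ν`, so `g = g^ν + b₁(Γ)`.
Weighted subgraphs `Δ^w` satisfying (C1) and (C2) with respect to `d : V → ℤ/r` of total
sum `0` are encoded by pairs `(u,v)` of half-edge weight functions as in the paper, with
`Δ = {e | u e ≠ 0}`.  Then
`Σ_{Δ^w} r^{2g^ν + b₁(Γ∖Δ)} · r^{b₁(Γ) − b₁(Γ∖Δ)} = r^{2g}`. -/
theorem stmt5 {V E : Type} [Fintype V] [Fintype E] [DecidableEq V]
    (head tail : E → V) (r : ℕ) [NeZero r]
    (hconn : ∀ a b : V, Relation.ReflTransGen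
      (fun x y => ∃ e, (head e = x ∧ tail e = y) ∨ (head e = y ∧ tail e = x)) a b)
    (gnu g : ℕ) (hg : g = gnu + subgraphBetti head tail (Finset.univ : Finset E))
    (d : V → ZMod r) (hd : ∑ x, d x = 0) :
    ∑ p ∈ Finset.univ.filter (fun p : (E → ZMod r) × (E → ZMod r) =>
        (∀ e, p.1 e + p.2 e = 0 ∧ (p.1 e = 0 ↔ p.2 e = 0)) ∧
        (∀ x, (∑ e, ((if head e = x then p.1 e else 0) +
          (if tail e = x then p.2 e else 0))) = d x)),
      r ^ (2 * gnu + subgraphBetti head tail (Finset.univ.filter (fun e => p.1 e = 0)))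
        * r ^ (subgraphBetti head tail (Finset.univ : Finset E)
            - subgraphBetti head tail (Finset.univ.filter (fun e => p.1 e = 0)))
      = r ^ (2 * g) := by
  have hterm : ∀ s : Finset E, r ^ (2 * gnu + subgraphBetti head tail s) *
      r ^ (subgraphBetti head tail Finset.univ - subgraphBetti head tail s) =
        r ^ (2 * gnu + subgraphBetti head tail Finset.univ) := fun s => by
    rw [← pow_add, Nat.add_assoc,
      Nat.add_sub_cancel' (subgraphBetti_mono head tail (Finset.subset_univ s))]
  rw [Finset.sum_congr rfl fun p _ => hterm _, Finset.sum_const, smul_eq_mul,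
    card_filter_halfEdgeWeights, card_filter_boundary_eq_pow_subgraphBetti head tail hconn d hd,
    ZMod.card, ← pow_add, hg]
  ring_nf
end

section
/- Let X be a quasistable curve of genus g ≥ 2 and d an integer. If a multidegree d̲ on X is balanced, then for every connected component Z of the non-exceptional subcurve X̃ one has d_Z − d·w_Z/(2g−2) = −k_Z/2. Consequently, if d̲ is stably balanced then X̃ is connected. (Combinatorial formulation: model X by a graph with vertex weights w_i ∈ ℤ, a distinguished set of 'exceptional' vertices each with degree d_E = 1 and w_E = 0 and exactly two edges to the rest; balance means |d_Z − d·w_Z/(2g−2)| ≤ k_Z/2 for every vertex subset Z, where k_Z is the number of edges from Z to its complement. Prove that if Z is a union of connected components of the non-exceptional part together with none of the exceptional vertices, and every exceptional vertex has its two neighbors distributed so that k_Z counts edges to exceptional vertices, then equality d_Z − d·w_Z/(2g−2) = −k_Z/2 holds for each connected component Z of the non-exceptional part.) -/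
/-!
Let `Z` be a union of connected components of `X̃` and `Y = Z ∪ Exc`. Every node of an
exceptional component leads to a non-exceptional one, so it leaves exactly one of `Z` and `Y`:
`k_Z + k_Y = 2·#Exc`. Passing from `Z` to `Y` raises the degree by `#Exc` and leaves `w`
unchanged, so the upper Basic Inequality for `Y` becomes `(2g−2)·d_Z − d·w_Z ≤ −(g−1)·k_Z`,
the reverse of the lower one for `Z`.
-/

/-- The number of edges of the graph `(V, E, head, tail)` joining the vertex subset `Z`
to its complement (the quantity `k_Z`). -/
def crossEdges {V E : Type} [Fintype E] [DecidableEq V]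
    (head tail : E → V) (Z : Finset V) : ℕ :=
  (Finset.univ.filter (fun e =>
    (head e ∈ Z ∧ tail e ∉ Z) ∨ (head e ∉ Z ∧ tail e ∈ Z))).card

open Finset

section Graph

variable {V E : Type} [Fintype E] [DecidableEq V] {head tail : E → V}

theorem crossEdges_add_crossEdges_union {Z N : Finset V}
    (hN : ∀ e, head e ∈ N → tail e ∉ N) (hZN : Disjoint Z N)
    (hout : ∀ e, head e ∈ Z → tail e ∉ Z → tail e ∈ N)
    (hin : ∀ e, tail e ∈ Z → head e ∉ Z → head e ∈ N) :
    crossEdges head tail Z + crossEdges head tail (Z ∪ N) =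
      #{e | head e ∈ N ∨ tail e ∈ N} := by
  simp only [crossEdges, card_filter, ← sum_add_distrib]
  refine sum_congr rfl fun e _ => ?_
  have := disjoint_left.mp hZN
  grind

theorem card_incident_eq_sum_degree {N : Finset V} (hN : ∀ e, head e ∈ N → tail e ∉ N) :
    #{e | head e ∈ N ∨ tail e ∈ N} = ∑ x ∈ N, #{e | head e = x ∨ tail e = x} := by
  classical
  have hbiUnion : ({e | head e ∈ N ∨ tail e ∈ N} : Finset E) =
      N.biUnion fun x => {e | head e = x ∨ tail e = x} := by
    ext e
    simp only [mem_filter, mem_univ, true_and, mem_biUnion]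
    constructor
    · rintro (h | h)
      exacts [⟨_, h, Or.inl rfl⟩, ⟨_, h, Or.inr rfl⟩]
    · rintro ⟨x, hx, rfl | rfl⟩ <;> simp [hx]
  rw [hbiUnion, card_biUnion]
  intro x hx y hy hxy
  simp only [Function.onFun, disjoint_left, mem_filter, mem_univ, true_and]
  rintro e (rfl | rfl) (h | h)
  exacts [hxy h, hN e hx (h ▸ hy), hN e (h ▸ hy) hx, hxy h]

end Graph

theorem eq_neg_crossEdges_of_union_of_components {V E : Type} [Fintype E] [DecidableEq V]
    {head tail : E → V} {Exc : Finset V} {d w : V → ℤ} {g dtot : ℤ}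
    (hd : ∀ x ∈ Exc, d x = 1) (hw : ∀ x ∈ Exc, w x = 0)
    (hdeg : ∀ x ∈ Exc, #{e | head e = x ∨ tail e = x} = 2)
    (hExc : ∀ e, head e ∈ Exc → tail e ∉ Exc)
    (hbal : ∀ Z : Finset V,
      |(2 * g - 2) * (∑ x ∈ Z, d x) - dtot * (∑ x ∈ Z, w x)|
        ≤ (g - 1) * (crossEdges head tail Z : ℤ))
    {Z : Finset V} (hZ : ∀ x ∈ Z, x ∉ Exc)
    (hout : ∀ e, head e ∈ Z → tail e ∉ Z → tail e ∈ Exc)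
    (hin : ∀ e, tail e ∈ Z → head e ∉ Z → head e ∈ Exc) :
    (2 * g - 2) * (∑ x ∈ Z, d x) - dtot * (∑ x ∈ Z, w x)
      = -((g - 1) * (crossEdges head tail Z : ℤ)) := by
  have hZExc : Disjoint Z Exc := disjoint_left.mpr hZ
  have hk : crossEdges head tail Z + crossEdges head tail (Z ∪ Exc) = 2 * #Exc := by
    rw [crossEdges_add_crossEdges_union hExc hZExc hout hin, card_incident_eq_sum_degree hExc,
      sum_congr rfl hdeg, sum_const, smul_eq_mul, mul_comm]
  have hdY : ∑ x ∈ Z ∪ Exc, d x = ∑ x ∈ Z, d x + #Exc := by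
    rw [sum_union hZExc, sum_congr rfl hd, sum_const, nsmul_one]
  have hwY : ∑ x ∈ Z ∪ Exc, w x = ∑ x ∈ Z, w x := by
    rw [sum_union hZExc, sum_eq_zero hw, add_zero]
  have hZbal := abs_le.mp (hbal Z)
  have hYbal := abs_le.mp (hbal (Z ∪ Exc))
  rw [hdY, hwY] at hYbal
  have hk' : (crossEdges head tail Z + crossEdges head tail (Z ∪ Exc) : ℤ) = 2 * #Exc := by
    exact_mod_cast hk
  linarith [hZbal.1, hYbal.2, congrArg ((g - 1) * ·) hk']

theorem stmt7_general {V E : Type} [Fintype V] [Fintype E] [DecidableEq V]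
    (head tail : E → V) (Exc : Finset V) (d w : V → ℤ)
    (g : ℕ) (dtot : ℤ)
    (hexc : ∀ x ∈ Exc, d x = 1 ∧ w x = 0 ∧
      (Finset.univ.filter (fun e => head e = x ∨ tail e = x)).card = 2 ∧
      (∀ e, head e = x → tail e ∉ Exc) ∧ (∀ e, tail e = x → head e ∉ Exc))
    (hbal : ∀ Z : Finset V,
      |(2 * (g : ℤ) - 2) * (∑ x ∈ Z, d x) - dtot * (∑ x ∈ Z, w x)|
        ≤ ((g : ℤ) - 1) * (crossEdges head tail Z : ℤ)) :
    (∀ Z : Finset V, (∀ x ∈ Z, x ∉ Exc) →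
      (∀ e, head e ∈ Z → tail e ∉ Z → tail e ∈ Exc) →
      (∀ e, tail e ∈ Z → head e ∉ Z → head e ∈ Exc) →
      (2 * (g : ℤ) - 2) * (∑ x ∈ Z, d x) - dtot * (∑ x ∈ Z, w x)
        = -(((g : ℤ) - 1) * (crossEdges head tail Z : ℤ))) ∧
    ((∀ Z : Finset V, Z.Nonempty →
        (2 * (g : ℤ) - 2) * (∑ x ∈ Z, d x) - dtot * (∑ x ∈ Z, w x)
          = -(((g : ℤ) - 1) * (crossEdges head tail Z : ℤ)) →
        Finset.univ \ Exc ⊆ Z) →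
      ∀ Z : Finset V, Z.Nonempty → (∀ x ∈ Z, x ∉ Exc) →
        (∀ e, head e ∈ Z → tail e ∉ Z → tail e ∈ Exc) →
        (∀ e, tail e ∈ Z → head e ∉ Z → head e ∈ Exc) →
        Z = Finset.univ \ Exc) := by
  have hcomponents := fun Z ↦ eq_neg_crossEdges_of_union_of_components (Z := Z)
    (fun x hx ↦ (hexc x hx).1) (fun x hx ↦ (hexc x hx).2.1) (fun x hx ↦ (hexc x hx).2.2.1)
    (fun e he ↦ (hexc _ he).2.2.2.1 e rfl) hbal
  refine ⟨fun Z ↦ hcomponents Z, fun hstable Z hne hZ hout hin ↦ ?_⟩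
  refine Subset.antisymm (fun x hx ↦ mem_sdiff.mpr ⟨mem_univ x, hZ x hx⟩) ?_
  exact hstable Z hne (hcomponents Z hZ hout hin)

/-- Combinatorial model of a quasistable curve `X` of genus `g ≥ 2`: a graph with vertex
set `V` (components of `X`), edge set `E` (nodes), vertex degrees `d : V → ℤ` of total
degree `dtot`, and weights `w : V → ℤ` (degrees of the dualizing sheaf) of total `2g−2`;
the exceptional vertices `Exc` have `d = 1`, `w = 0` and exactly two edges, both with
non-exceptional other endpoint.  Balance means
`|(2g−2)·d_Z − dtot·w_Z| ≤ (g−1)·k_Z` for every subset `Z` (the Basic Inequality with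
denominators cleared).  Conclusions: (1) if `d̲` is balanced, then for every `Z` which is
a union of connected components of the non-exceptional subcurve `X̃` (i.e. `Z` is disjoint
from `Exc` and every edge leaving `Z` goes to an exceptional vertex), equality
`(2g−2)·d_Z − dtot·w_Z = −(g−1)·k_Z` holds; (2) consequently, if `d̲` is stably balanced
(every nonempty `Z` realizing this equality contains all non-exceptional vertices), then
`X̃` is connected: every nonempty union of components of `X̃` is all of `X̃`. -/
theorem stmt7 {V E : Type} [Fintype V] [Fintype E] [DecidableEq V]
    (head tail : E → V) (Exc : Finset V) (d w : V → ℤ)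
    (g : ℕ) (hg : 2 ≤ g) (dtot : ℤ)
    (hdtot : ∑ x, d x = dtot) (hw : ∑ x, w x = 2 * (g : ℤ) - 2)
    (hexc : ∀ x ∈ Exc, d x = 1 ∧ w x = 0 ∧
      (Finset.univ.filter (fun e => head e = x ∨ tail e = x)).card = 2 ∧
      (∀ e, head e = x → tail e ∉ Exc) ∧ (∀ e, tail e = x → head e ∉ Exc))
    (hbal : ∀ Z : Finset V,
      |(2 * (g : ℤ) - 2) * (∑ x ∈ Z, d x) - dtot * (∑ x ∈ Z, w x)|
        ≤ ((g : ℤ) - 1) * (crossEdges head tail Z : ℤ)) :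
    (∀ Z : Finset V, (∀ x ∈ Z, x ∉ Exc) →
      (∀ e, head e ∈ Z → tail e ∉ Z → tail e ∈ Exc) →
      (∀ e, tail e ∈ Z → head e ∉ Z → head e ∈ Exc) →
      (2 * (g : ℤ) - 2) * (∑ x ∈ Z, d x) - dtot * (∑ x ∈ Z, w x)
        = -(((g : ℤ) - 1) * (crossEdges head tail Z : ℤ))) ∧
    ((∀ Z : Finset V, Z.Nonempty →
        (2 * (g : ℤ) - 2) * (∑ x ∈ Z, d x) - dtot * (∑ x ∈ Z, w x)
          = -(((g : ℤ) - 1) * (crossEdges head tail Z : ℤ)) →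
        Finset.univ \ Exc ⊆ Z) →
      ∀ Z : Finset V, Z.Nonempty → (∀ x ∈ Z, x ∉ Exc) →
        (∀ e, head e ∈ Z → tail e ∉ Z → tail e ∈ Exc) →
        (∀ e, tail e ∈ Z → head e ∉ Z → head e ∈ Exc) →
        Z = Finset.univ \ Exc) :=
  stmt7_general head tail Exc d w g dtot hexc hbal
end

section
/- Numerical step in Proposition 5.4 (Step 2): let r ≥ 3, k ≥ 2, and integers l, w₁, w₂ with w₁ + w₂ = 2g − 2 and l·(w₁ + w₂) ≡ 0 (mod r). Exclude the cases: (a) r = 2; (b) k = 2 and l·w₁ ≡ l·w₂ ≡ 0 (mod r); (c) k = 3, r = 4, l·w₁ ≡ l·w₂ ≡ 2 (mod 4); (d) k = 4, r = 3, l·w₁ ≡ l·w₂ ≡ 0 (mod 3). Then there exists an integer s with k ≤ |s| < k·r/2 and l·w₁ + s ≡ 0 (mod r) (and hence l·w₂ − s ≡ 0 (mod r)). Equivalently, the set (−k/2 + lw₁/r, −k/r + lw₁/r] ∪ [k/r + lw₁/r, k/2 + lw₁/r) contains an integer. -/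
/-- Pure arithmetic core: for `r ≥ 3`, `k ≥ 2` and a residue `0 ≤ a < r` outside the
exceptional cases, there is `s ≡ a (mod r)` with `k ≤ |s| < k·r/2`. -/
lemma key9 (r k : ℕ) (hr : 3 ≤ r) (hk : 2 ≤ k) (a : ℤ) (ha0 : 0 ≤ a) (har : a < r)
    (hb : ¬(k = 2 ∧ a = 0)) (hc : ¬(k = 3 ∧ r = 4 ∧ a = 2))
    (hd : ¬(k = 4 ∧ r = 3 ∧ a = 0)) :
    ∃ s : ℤ, (k : ℤ) ≤ |s| ∧ 2 * |s| < (k : ℤ) * r ∧ (r : ℤ) ∣ s - a := by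
  have hrZ : (3 : ℤ) ≤ r := by exact_mod_cast hr
  have hkZ : (2 : ℤ) ≤ k := by exact_mod_cast hk
  by_cases h1 : 2 * ((k : ℤ) + r - 1) < (k : ℤ) * r
  · set y : ℤ := (k : ℤ) - a + r - 1 with hy
    set m : ℤ := y % r with hm
    have h2 : 0 ≤ m := Int.emod_nonneg y (by positivity)
    have h3 : m < r := Int.emod_lt_of_pos y (by positivity)
    have heq : m + (r : ℤ) * (y / r) = y := Int.emod_add_mul_ediv y r
    refine ⟨a + (y - m), ?_, ?_, ⟨y / r, by linarith⟩⟩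
    · rw [abs_of_nonneg (by linarith)]; linarith
    · rw [abs_of_nonneg (by linarith)]; linarith
  · push_neg at h1
    have hk4 : k ≤ 4 := by
      by_contra h
      push_neg at h
      have h5 : (5 : ℤ) ≤ k := by exact_mod_cast h
      nlinarith [mul_nonneg (by linarith : (0:ℤ) ≤ (k:ℤ) - 5) (by linarith : (0:ℤ) ≤ (r:ℤ) - 3)]
    interval_cases k
    · -- k = 2
      have ha1 : 1 ≤ a := by
        rcases ha0.lt_or_eq with h | h
        · linarith
        · exact absurd ⟨rfl, h.symm⟩ hb
      by_cases h2 : 2 ≤ a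
      · exact ⟨a, by rw [abs_of_nonneg ha0]; push_cast; linarith,
          by rw [abs_of_nonneg ha0]; push_cast; linarith, ⟨0, by ring⟩⟩
      · have : a = 1 := by omega
        subst this
        refine ⟨1 - r, ?_, ?_, ⟨-1, by ring⟩⟩
        · rw [abs_of_nonpos (by linarith)]; push_cast; linarith
        · rw [abs_of_nonpos (by linarith)]; push_cast; linarith
    · -- k = 3
      have hr4 : r ≤ 4 := by
        have : (3 : ℤ) * r ≤ 2 * ((3:ℤ) + r - 1) := by exact_mod_cast h1
        have : (r : ℤ) ≤ 4 := by linarith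
        exact_mod_cast this
      interval_cases r
      · -- r = 3
        have : a = 0 ∨ a = 1 ∨ a = 2 := by omega
        rcases this with h | h | h <;> subst h
        · exact ⟨3, by norm_num⟩
        · exact ⟨4, by norm_num⟩
        · exact ⟨-4, by norm_num⟩
      · -- r = 4
        have ha2 : a ≠ 2 := fun h => hc ⟨rfl, rfl, h⟩
        have : a = 0 ∨ a = 1 ∨ a = 3 := by omega
        rcases this with h | h | h <;> subst h
        · exact ⟨4, by norm_num⟩
        · exact ⟨5, by norm_num⟩
        · exact ⟨3, by norm_num⟩
    · -- k = 4
      have hr3 : r = 3 := by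
        have : (4 : ℤ) * r ≤ 2 * ((4:ℤ) + r - 1) := by exact_mod_cast h1
        have h3 : (r : ℤ) ≤ 3 := by linarith
        have : r ≤ 3 := by exact_mod_cast h3
        omega
      subst hr3
      have ha1 : a ≠ 0 := fun h => hd ⟨rfl, rfl, h⟩
      have : a = 1 ∨ a = 2 := by omega
      rcases this with h | h <;> subst h
      · exact ⟨4, by norm_num⟩
      · exact ⟨5, by norm_num⟩

/-- Numerical step in Proposition 5.4 (Step 2): for `r ≥ 3`, `k ≥ 2` and integers
`l, w₁, w₂` with `r ∣ l(w₁ + w₂)`, outside the exceptional cases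
(b) `k = 2` with `r ∣ l·w₁`, (c) `k = 3, r = 4` with `l·w₁ ≡ 2 (mod 4)`, and
(d) `k = 4, r = 3` with `3 ∣ l·w₁` (case (a) `r = 2` being excluded by `r ≥ 3`),
there is an integer `s` with `k ≤ |s| < k·r/2`, `r ∣ l·w₁ + s` and hence
`r ∣ l·w₂ − s`. -/
theorem stmt9 (r k : ℕ) (hr : 3 ≤ r) (hk : 2 ≤ k) (l w₁ w₂ : ℤ)
    (hdvd : (r : ℤ) ∣ l * (w₁ + w₂))
    (hb : ¬(k = 2 ∧ (r : ℤ) ∣ l * w₁))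
    (hc : ¬(k = 3 ∧ r = 4 ∧ (l * w₁) % 4 = 2))
    (hd : ¬(k = 4 ∧ r = 3 ∧ (3 : ℤ) ∣ l * w₁)) :
    ∃ s : ℤ, (k : ℤ) ≤ |s| ∧ 2 * |s| < (k : ℤ) * r ∧
      (r : ℤ) ∣ l * w₁ + s ∧ (r : ℤ) ∣ l * w₂ - s := by
  have hrpos : (0 : ℤ) < r := by positivity
  set a : ℤ := (-(l * w₁)) % r with ha
  have ha0 : 0 ≤ a := Int.emod_nonneg _ (by positivity)
  have har : a < r := Int.emod_lt_of_pos _ hrpos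
  have hda : (r : ℤ) ∣ l * w₁ + a := by
    have heq : a + (r : ℤ) * ((-(l * w₁)) / r) = -(l * w₁) := Int.emod_add_mul_ediv _ r
    exact ⟨-((-(l * w₁)) / r), by rw [mul_neg]; linarith⟩
  have hb' : ¬(k = 2 ∧ a = 0) := by
    rintro ⟨hk2, ha2⟩
    exact hb ⟨hk2, (dvd_neg).mp (Int.dvd_of_emod_eq_zero ha2)⟩
  have hc' : ¬(k = 3 ∧ r = 4 ∧ a = 2) := by
    rintro ⟨hk3, hr4, ha2⟩
    refine hc ⟨hk3, hr4, ?_⟩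
    rw [ha, hr4] at ha2
    have : (-(l * w₁)) % (4:ℤ) = 2 := by exact_mod_cast ha2
    omega
  have hd' : ¬(k = 4 ∧ r = 3 ∧ a = 0) := by
    rintro ⟨hk4, hr3, ha2⟩
    refine hd ⟨hk4, hr3, ?_⟩
    rw [ha, hr3] at ha2
    have : (-(l * w₁)) % (3:ℤ) = 0 := by exact_mod_cast ha2
    omega
  obtain ⟨s, hs1, hs2, hs3⟩ := key9 r k hr hk a ha0 har hb' hc' hd'
  have h6 : (r : ℤ) ∣ l * w₁ + s := by
    have : l * w₁ + s = (l * w₁ + a) + (s - a) := by ring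
    rw [this]; exact dvd_add hda hs3
  refine ⟨s, hs1, hs2, h6, ?_⟩
  have : l * w₂ - s = l * (w₁ + w₂) - (l * w₁ + s) := by ring
  rw [this]; exact dvd_sub hdvd h6
end

section
/- Let C be a stable curve whose dual graph has first Betti number 0 (C of compact type). Then for any d : V(Γ_C) → ℤ/r with total sum ≡ deg N (mod r), there is exactly one weighted subgraph Δ^w of Γ_C satisfying conditions (C1) and (C2). Moreover Δ = ∅ (the empty subgraph with no blown-up nodes) if and only if d ≡ 0, i.e., the degree of N on every component is divisible by r. (Combinatorial formulation: for a finite tree T and d : V(T) → ℤ/r with Σ d(v) = 0, there is a unique assignment of weights w(h) ∈ {0,1,…,r−1} to half-edges with w(h) + w(h') ≡ 0 mod r for each edge {h,h'} and Σ_{h at v} w(h) ≡ d(v) mod r for each vertex; and all weights are 0 iff d ≡ 0. Here an edge is 'in Δ' iff its weights are nonzero.) -/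
/-!
Orient every edge from `tail` to `head`. With `v = -u` forced by the edge condition, the vertex
condition says that `u : E → ℤ/r` is a flow whose divergence is `d`. The divergence map of a
connected graph hits every function of total sum zero, since its image contains `δ_a - δ_b`
whenever `a, b` are joined by an edge, hence for all `a, b`. For a tree the domain `(ℤ/r)^E`
and the sum-zero functions `V → ℤ/r` both have `r ^ #E` elements, so this surjection is a
bijection: the flow exists and is unique, and it vanishes exactly when `d` does.
-/

open Finset

namespace EdgeFlow

variable {V E M : Type*} [Fintype E] [DecidableEq V] [AddCommGroup M]
  (head tail : E → V)

def divergence : (E → M) →+ (V → M) :=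
  AddMonoidHom.mk'
    (fun u x => ∑ e, ((if head e = x then u e else 0) + (if tail e = x then -u e else 0)))
    fun u u' => by
      funext x
      simp only [Pi.add_apply, ← sum_add_distrib]
      refine sum_congr rfl fun e _ => ?_
      split_ifs <;> abel

lemma divergence_apply (u : E → M) (x : V) : divergence head tail u x =
    ∑ e, ((if head e = x then u e else 0) + (if tail e = x then -u e else 0)) :=
  rfl

variable (V M) in
def totalSum [Fintype V] : (V → M) →+ M :=
  AddMonoidHom.mk' (fun d => ∑ x, d x) fun _ _ => sum_add_distrib

lemma totalSum_divergence [Fintype V] (u : E → M) :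
    totalSum V M (divergence head tail u) = 0 := by
  simp only [totalSum, AddMonoidHom.mk'_apply, divergence_apply]
  rw [sum_comm]
  simp [sum_add_distrib]

lemma divergence_single [DecidableEq E] (e : E) (m : M) :
    divergence head tail (Pi.single e m) = Pi.single (head e) m - Pi.single (tail e) m := by
  funext x
  rw [divergence_apply, Fintype.sum_eq_single e fun e' he' => by simp [he']]
  simp only [Pi.single_eq_same, Pi.sub_apply, Pi.single_apply, sub_eq_add_neg, eq_comm]
  split_ifs <;> simp

def Adj (x y : V) : Prop := ∃ e, (head e = x ∧ tail e = y) ∨ (head e = y ∧ tail e = x)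

lemma single_sub_single_mem_range {a b : V} (h : Relation.ReflTransGen (Adj head tail) a b)
    (m : M) : (Pi.single a m - Pi.single b m : V → M) ∈ (divergence head tail).range := by
  classical
  induction h with
  | refl => simp
  | @tail b c _ hbc ih =>
    have hstep : (Pi.single b m - Pi.single c m : V → M) ∈ (divergence head tail).range := by
      obtain ⟨e, ⟨rfl, rfl⟩ | ⟨rfl, rfl⟩⟩ := hbc
      · exact ⟨Pi.single e m, divergence_single head tail e m⟩
      · rw [← neg_sub]
        exact neg_mem ⟨Pi.single e m, divergence_single head tail e m⟩
    simpa only [sub_add_sub_cancel] using add_mem ih hstep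

lemma range_divergence [Fintype V] (hconn : ∀ a b, Relation.ReflTransGen (Adj head tail) a b) :
    (divergence head tail).range = (totalSum V M).ker := by
  refine le_antisymm (fun _ ⟨u, hu⟩ => hu ▸ totalSum_divergence head tail u) fun d hd => ?_
  rcases isEmpty_or_nonempty V with _ | ⟨⟨x₀⟩⟩
  · exact Subsingleton.elim d 0 ▸ zero_mem _
  have hd : d = ∑ x, (Pi.single x (d x) - Pi.single x₀ (d x)) := by
    have hsingle : ∑ x, (Pi.single x₀ (d x) : V → M) = Pi.single x₀ (∑ x, d x) :=
      (map_sum (AddMonoidHom.single (fun _ => M) x₀) d univ).symm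
    rw [sum_sub_distrib, univ_sum_single, hsingle, show ∑ x, d x = 0 from hd, Pi.single_zero,
      sub_zero]
  rw [hd]
  exact sum_mem fun x _ => single_sub_single_mem_range head tail (hconn x x₀) _

variable (V M) in
lemma card_ker_totalSum_mul_card [Fintype V] [Nonempty V] [Finite M] :
    Nat.card (totalSum V M).ker * Nat.card M = Nat.card M ^ Fintype.card V := by
  obtain ⟨x₀⟩ := ‹Nonempty V›
  have hsurj : Function.Surjective (totalSum V M) := fun m =>
    ⟨Pi.single x₀ m, by simp [totalSum]⟩
  calc Nat.card (totalSum V M).ker * Nat.card M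
      = Nat.card (totalSum V M).ker * (totalSum V M).ker.index := by
        rw [AddSubgroup.index_ker, AddMonoidHom.range_eq_top.2 hsurj, AddSubgroup.card_top]
    _ = Nat.card M ^ Fintype.card V := by
        rw [AddSubgroup.card_mul_index, Nat.card_fun, Nat.card_eq_fintype_card (α := V)]

lemma injective_divergence [Fintype V] [Finite M]
    (hconn : ∀ a b, Relation.ReflTransGen (Adj head tail) a b)
    (htree : Fintype.card V = Fintype.card E + 1) :
    Function.Injective (divergence (M := M) head tail) := by
  have : Nonempty V := Fintype.card_pos_iff.1 (by omega)
  have hsum := card_ker_totalSum_mul_card V M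
  rw [htree, pow_succ] at hsum
  have hD := (divergence (M := M) head tail).ker.card_mul_index
  rw [AddSubgroup.index_ker, range_divergence head tail hconn, Nat.card_fun,
    Nat.card_eq_fintype_card (α := E), Nat.eq_of_mul_eq_mul_right Nat.card_pos hsum] at hD
  rw [← AddMonoidHom.ker_eq_bot_iff, ← AddSubgroup.card_eq_one]
  exact Nat.eq_of_mul_eq_mul_right (pow_pos Nat.card_pos _) (hD.trans (one_mul _).symm)

lemma divergence_eq_iff {u v : E → M} (huv : ∀ e, u e + v e = 0) (d : V → M) :
    divergence head tail u = d ↔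
      ∀ x, ∑ e, ((if head e = x then u e else 0) + (if tail e = x then v e else 0)) = d x := by
  obtain rfl : v = -u := funext fun e => eq_neg_of_add_eq_zero_right (huv e)
  exact funext_iff

end EdgeFlow

/-- Compact type case: let `T` be a finite tree (a connected graph with
`#vertices = #edges + 1`), `r ≥ 1`, and `d : V → ℤ/r` with `Σ_v d(v) = 0` (the class of
the multidegree of `N` mod `r`).  Weight assignments to half-edges with values in
`{0,…,r−1}` are encoded by a pair `(u, v) : (E → ℤ/r)²` (weight at the head and at the
tail of each edge) with `u e + v e = 0` for every edge; the vertex condition says the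
incident weights sum to `d`.  Then there is exactly one such weight assignment, and
moreover any such assignment has all weights zero (i.e. `Δ = ∅`) if and only if
`d ≡ 0`. -/
theorem stmt11 {V E : Type} [Fintype V] [Fintype E] [DecidableEq V]
    (head tail : E → V) (r : ℕ) (hr : 1 ≤ r)
    (hconn : ∀ a b : V, Relation.ReflTransGen
      (fun x y => ∃ e, (head e = x ∧ tail e = y) ∨ (head e = y ∧ tail e = x)) a b)
    (htree : Fintype.card V = Fintype.card E + 1)
    (d : V → ZMod r) (hd : ∑ x, d x = 0) :
    (∃! p : (E → ZMod r) × (E → ZMod r),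
      (∀ e, p.1 e + p.2 e = 0) ∧
      (∀ x, (∑ e, ((if head e = x then p.1 e else 0) +
        (if tail e = x then p.2 e else 0))) = d x)) ∧
    (∀ u v : E → ZMod r, (∀ e, u e + v e = 0) →
      (∀ x, (∑ e, ((if head e = x then u e else 0) +
        (if tail e = x then v e else 0))) = d x) →
      ((∀ e, u e = 0) ↔ ∀ x, d x = 0)) := by
  have : NeZero r := ⟨by omega⟩
  have hinj := EdgeFlow.injective_divergence (M := ZMod r) head tail hconn htree
  obtain ⟨u, hu⟩ : d ∈ (EdgeFlow.divergence head tail).range := by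
    rw [EdgeFlow.range_divergence head tail hconn]
    exact hd
  have hneg : ∀ e, u e + -u e = 0 := fun e => add_neg_cancel (u e)
  refine ⟨⟨(u, -u), ⟨hneg, (EdgeFlow.divergence_eq_iff head tail hneg d).1 hu⟩, ?_⟩, ?_⟩
  · rintro ⟨u', v'⟩ ⟨huv, hu'⟩
    obtain rfl : v' = -u' := funext fun e => eq_neg_of_add_eq_zero_right (huv e)
    have hdiv' := (EdgeFlow.divergence_eq_iff head tail huv d).2 hu'
    obtain rfl : u' = u := hinj (hdiv'.trans hu.symm)
    rfl
  · intro u' v' huv hu'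
    obtain rfl := (EdgeFlow.divergence_eq_iff head tail huv d).2 hu'
    simpa only [funext_iff, Pi.zero_apply] using (hinj.eq_iff' (map_zero _)).symm
end

section
/- Power series computation from Lemma 3.9: let A be a commutative ring, and suppose η₀, η₁ are invertible with η₀η₁ = 1. Suppose an algebra endomorphism ι fixes x and y, with x·ι(η₀) = x·η₀ (both equal to h₀) and y·ι(η₁) = y·η₁, and ι(η₀)·ι(η₁) = 1, where ι(η₀) = Σ_{i<0} a_i η₀^{−i} and ι(η₁) = Σ_{i<0} b_i η₁^{−i} are power series with a_{−1}, b_{−1} units. Then ι(η₀)ι(η₁) = 1 forces a_i = b_i = 0 for i < −1 and a_{−1}·b_{−1} = 1; i.e., in the ring of formal Laurent series, if f(t) = Σ_{i≥1} a_{−i} t^i and g(s) = Σ_{i≥1} b_{−i} s^i with a_{−1}, b_{−1} units satisfy f(t)·g(t⁻¹) = 1 (as an identity of formal expressions in t, t⁻¹ with coefficients in a local ring), then f(t) = a_{−1} t and g(s) = a_{−1}⁻¹ s. -/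
/-- Power series computation from Lemma 3.9: work in the ring `R[t, t⁻¹]` of Laurent
polynomials over a (local) commutative ring `R`, with `f(t) = Σ_{i≥1} a_i t^i` and
`g(s) = Σ_{i≥1} b_i s^i` given by finitely supported coefficient families
`a, b : ℤ →₀ R` vanishing in degrees `≤ 0`, with `a 1` and `b 1` units.  The hypothesis
`f(t) · g(t⁻¹) = 1` is expressed by the convolution identities: for every `n : ℤ`, the
coefficient `Σ_j a (j+n) · b j` of `t^n` in the product is `1` if `n = 0` and `0`
otherwise.  Conclusion: `f(t) = a₁·t` and `g(s) = a₁⁻¹·s`, i.e. all other coefficients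
vanish and `a 1 · b 1 = 1`. -/
theorem stmt16 {R : Type} [CommRing R] [IsLocalRing R] (a b : ℤ →₀ R)
    (ha : ∀ i : ℤ, i ≤ 0 → a i = 0) (hb : ∀ i : ℤ, i ≤ 0 → b i = 0)
    (ha1 : IsUnit (a 1)) (hb1 : IsUnit (b 1))
    (hmul : ∀ n : ℤ, (∑ j ∈ b.support, a (j + n) * b j) = if n = 0 then 1 else 0) :
    (∀ i : ℤ, i ≠ 1 → a i = 0) ∧ (∀ i : ℤ, i ≠ 1 → b i = 0) ∧ a 1 * b 1 = 1 := by
  have hbpos : ∀ j ∈ b.support, 1 ≤ j := by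
    intro j hj
    by_contra h
    push_neg at h
    exact (Finsupp.mem_support_iff.mp hj) (hb j (by omega))
  have hA : ∀ i : ℤ, 1 < i → a i = 0 := by
    by_contra hcon
    push_neg at hcon
    obtain ⟨i0, hi0, hai0⟩ := hcon
    set S := a.support.filter (fun i => 1 < i) with hS
    have hne : S.Nonempty :=
      ⟨i0, Finset.mem_filter.mpr ⟨Finsupp.mem_support_iff.mpr hai0, hi0⟩⟩
    set N := S.max' hne with hN
    have hNS : N ∈ S := S.max'_mem hne
    have hN1 : 1 < N := (Finset.mem_filter.mp hNS).2
    have htop : ∀ i, N < i → a i = 0 := by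
      intro i hi
      by_contra h
      have hiS : i ∈ S := Finset.mem_filter.mpr ⟨Finsupp.mem_support_iff.mpr h, by omega⟩
      exact absurd (S.le_max' i hiS) (by omega)
    have key := hmul (N - 1)
    rw [if_neg (by omega)] at key
    have hsum : (∑ j ∈ b.support, a (j + (N - 1)) * b j) = a N * b 1 := by
      rw [Finset.sum_eq_single 1]
      · norm_num
      · intro j hj hj1
        have h1 := hbpos j hj
        rw [htop _ (by omega), zero_mul]
      · intro h1
        rw [Finsupp.notMem_support_iff.mp h1, mul_zero]
    rw [hsum] at key
    have : a N = 0 := (IsUnit.mul_left_eq_zero hb1).mp key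
    exact (Finsupp.mem_support_iff.mp (Finset.mem_filter.mp hNS).1) this
  have hA' : ∀ i : ℤ, i ≠ 1 → a i = 0 := by
    intro i hi
    rcases lt_trichotomy i 1 with h | h | h
    · exact ha i (by omega)
    · exact absurd h hi
    · exact hA i h
  have hB : ∀ i : ℤ, i ≠ 1 → b i = 0 := by
    intro i hi
    by_cases hmem : i ∈ b.support
    · have key := hmul (1 - i)
      rw [if_neg (by omega)] at key
      have hsum : (∑ j ∈ b.support, a (j + (1 - i)) * b j) = a 1 * b i := by
        rw [Finset.sum_eq_single i]
        · ring_nf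
        · intro j hj hji
          rw [hA' (j + (1 - i)) (by omega), zero_mul]
        · intro h; exact absurd hmem h
      rw [hsum] at key
      exact (IsUnit.mul_right_eq_zero ha1).mp key
    · exact Finsupp.notMem_support_iff.mp hmem
  refine ⟨hA', hB, ?_⟩
  have key := hmul 0
  rw [if_pos rfl] at key
  rw [Finset.sum_eq_single 1] at key
  · simpa using key
  · intro j hj hj1
    rw [hB j hj1, mul_zero]
  · intro h1
    rw [Finsupp.notMem_support_iff.mp h1, mul_zero]
end
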